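/- arXiv:2508.21237 — 7 statements merged into one kernel-verified Lean document; each statement's English description precedes it below -/
import Mathlib

section
/- Let P ∈ k[t] be monic irreducible with P and D(P) coprime in k[t] (in the meromorphic model this holds for every monic irreducible P), let n = deg(P), and let y_1, …, y_n be a k-basis of Λ_P. Then for every integer r ≥ 1 the elements D^j(y_i), for i = 1, …, n and j = 0, …, r−1, form a k-basis of Λ_{P^r}. -/
open Polynomial

noncomputable section

variable {F : Type*} [Field F]

/-- The fixed subfield `k = F^τ` of a difference field `(F, τ)`. -/
def kfix (τ : F →+* F) : Subfield F := RingHom.eqLocusField τ (RingHom.id F)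

/-- `τ` as a `k`-linear endomorphism of `F`. -/
def tauLin (τ : F →+* F) : F →ₗ[kfix τ] F where
  toFun := τ
  map_add' := map_add τ
  map_smul' := by
    intro c x
    show τ ((c : F) * x) = (c : F) * τ x
    rw [map_mul, c.2]
    rfl

/-- The Carlitz module map `a ↦ C_a = a(μ_ν − τ)` : the unique `k`-algebra morphism from
`k[t]` to the `k`-linear endomorphisms of `F` sending `t` to `μ_ν − τ`. -/
def carlitz (τ : F →+* F) (ν : F) : Polynomial (kfix τ) →ₐ[kfix τ] Module.End (kfix τ) F :=
  Polynomial.aeval (LinearMap.mulLeft (kfix τ) ν - tauLin τ)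

/-!
Since `[D, μ_ν − τ] = 1` and `[D, c] = D(c)` for constants, `[D, C_a] = C_{D(a)}` for every
`a ∈ k[t]`, with `a ↦ D(a)` a derivation of `k[t]`. Consequently `D` maps `Λ_{P^s}` into
`Λ_{P^{s+1}}`, and for `z ∈ Λ_P` one gets `C_{P^s}(D^s z) = s! · C_{(-D(P))^s} z`, an operator
injective on `Λ_P` because `P` and `D(P)` are coprime and `s! ≠ 0`. Applying `C_{P^{r-1}}` to a
linear relation among the `D^j y_i` (`j < r`) kills the terms with `j < r - 1` and forces the
coefficients with `j = r - 1` to vanish, so induction on `r` gives independence; since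
`dim Λ_{P^r} = r n`, the family is a basis.
-/

theorem LinearIndependent.of_castSucc_of_map_last {R M M' ι : Type*} [Ring R] [AddCommGroup M]
    [Module R M] [AddCommGroup M'] [Module R M'] [Fintype ι] {m : ℕ}
    {v : ι × Fin (m + 1) → M} (f : M →ₗ[R] M')
    (hlow : LinearIndependent R fun p : ι × Fin m => v (p.1, p.2.castSucc))
    (hker : ∀ i (j : Fin m), f (v (i, j.castSucc)) = 0)
    (htop : LinearIndependent R fun i => f (v (i, Fin.last m))) :
    LinearIndependent R v := by
  rw [Fintype.linearIndependent_iff]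
  intro g hg
  have hsplit : ∑ p : ι × Fin m, g (p.1, p.2.castSucc) • v (p.1, p.2.castSucc)
      + ∑ i, g (i, Fin.last m) • v (i, Fin.last m) = 0 := by
    rw [← hg, Fintype.sum_prod_type, Fintype.sum_prod_type, ← Finset.sum_add_distrib]
    simp only [Fin.sum_univ_castSucc]
  have hg_top : ∀ i, g (i, Fin.last m) = 0 := by
    refine Fintype.linearIndependent_iff.1 htop _ ?_
    simpa [hker] using congrArg f hsplit
  have hg_low : ∀ p : ι × Fin m, g (p.1, p.2.castSucc) = 0 := by
    refine Fintype.linearIndependent_iff.1 hlow _ ?_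
    simpa [hg_top] using hsplit
  rintro ⟨i, j⟩
  induction j using Fin.lastCases with
  | last => exact hg_top i
  | cast j => exact hg_low (i, j)

section Carlitz

variable {τ : F →+* F} {ν : F} (D : Derivation ℤ F F)

def constDeriv (hDτ : ∀ x, D (τ x) = τ (D x)) : Derivation ℤ (kfix τ) (kfix τ) :=
  Derivation.mk'
    { toFun := fun c => ⟨D c, by
        show τ (D c) = D c
        rw [← hDτ, c.2]
        rfl⟩
      map_add' := fun c d => Subtype.ext (D.map_add c d)
      map_smul' := fun m c => Subtype.ext (by simp) }
    (fun c d => Subtype.ext (by simp))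

@[simp]
lemma coe_constDeriv (hDτ : ∀ x, D (τ x) = τ (D x)) (c : kfix τ) :
    (constDeriv D hDτ c : F) = D c := rfl

/-- The paper's `D(a)`: the derivation of `k[t]` extending `D` on `k` with `t ↦ 1`. -/
def polyDeriv (hDτ : ∀ x, D (τ x) = τ (D x)) : Derivation ℤ (kfix τ)[X] (kfix τ)[X] :=
  letI : Differential (kfix τ) := ⟨constDeriv D hDτ⟩
  Differential.implicitDeriv 1

lemma polyDeriv_C (hDτ : ∀ x, D (τ x) = τ (D x)) (c : kfix τ) :
    polyDeriv D hDτ (C c) = C (constDeriv D hDτ c) :=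
  let _ : Differential (kfix τ) := ⟨constDeriv D hDτ⟩
  Differential.implicitDeriv_C 1 c

lemma polyDeriv_X (hDτ : ∀ x, D (τ x) = τ (D x)) : polyDeriv D hDτ X = 1 :=
  let _ : Differential (kfix τ) := ⟨constDeriv D hDτ⟩
  Differential.implicitDeriv_X 1

lemma coe_coeff_polyDeriv (hDτ : ∀ x, D (τ x) = τ (D x)) (a : (kfix τ)[X]) (i : ℕ) :
    ((polyDeriv D hDτ a).coeff i : F) = D (a.coeff i) + ((derivative a).coeff i : F) := by
  let _ : Differential (kfix τ) := ⟨constDeriv D hDτ⟩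
  simp [polyDeriv, Differential.implicitDeriv]

variable (τ ν)

lemma carlitz_X_apply (x : F) : carlitz τ ν X x = ν * x - τ x := by
  simp [carlitz, tauLin]

lemma carlitz_C_apply (c : kfix τ) (x : F) : carlitz τ ν (C c) x = c * x := by
  simp [carlitz, Module.algebraMap_end_apply]
  rfl

lemma carlitz_mul_apply (a b : (kfix τ)[X]) (x : F) :
    carlitz τ ν (a * b) x = carlitz τ ν a (carlitz τ ν b x) := by
  rw [map_mul, Module.End.mul_apply]

lemma carlitz_apply_comm (a b : (kfix τ)[X]) (x : F) :
    carlitz τ ν a (carlitz τ ν b x) = carlitz τ ν b (carlitz τ ν a x) := by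
  rw [← carlitz_mul_apply, mul_comm, carlitz_mul_apply]

lemma carlitz_apply_eq_zero_of_dvd {a b : (kfix τ)[X]} (hab : a ∣ b) {x : F}
    (hx : carlitz τ ν a x = 0) : carlitz τ ν b x = 0 := by
  obtain ⟨c, rfl⟩ := hab
  rw [mul_comm, carlitz_mul_apply, hx, map_zero]

lemma disjoint_ker_carlitz {a b : (kfix τ)[X]} (hab : IsCoprime a b) :
    Disjoint (LinearMap.ker (carlitz τ ν a)) (LinearMap.ker (carlitz τ ν b)) := by
  obtain ⟨u, v, huv⟩ := hab
  rw [Submodule.disjoint_def]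
  intro x (hxa : carlitz τ ν a x = 0) (hxb : carlitz τ ν b x = 0)
  calc x = carlitz τ ν (u * a + v * b) x := by rw [huv, map_one]; rfl
    _ = 0 := by simp [hxa, hxb]

lemma deriv_carlitz_X_apply (hDτ : ∀ x, D (τ x) = τ (D x)) (hDν : D ν = 1) (x : F) :
    D (carlitz τ ν X x) = carlitz τ ν X (D x) + x := by
  simp only [carlitz_X_apply, D.map_sub, D.leibniz, hDν, hDτ, smul_eq_mul]
  ring

lemma deriv_carlitz_apply (hDτ : ∀ x, D (τ x) = τ (D x)) (hDν : D ν = 1) (a : (kfix τ)[X])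
    (x : F) :
    D (carlitz τ ν a x) = carlitz τ ν a (D x) + carlitz τ ν (polyDeriv D hDτ a) x := by
  induction a using Polynomial.induction_on generalizing x with
  | C c => simp [polyDeriv_C, carlitz_C_apply, add_comm, mul_comm]
  | add a b ha hb => simp only [map_add, LinearMap.add_apply, ha, hb]; abel
  | monomial m c ih =>
    rw [pow_succ, ← mul_assoc]
    generalize C c * X ^ m = b at ih ⊢
    rw [carlitz_mul_apply, ih, deriv_carlitz_X_apply τ ν D hDτ hDν, Derivation.leibniz,
      polyDeriv_X]
    simp only [map_add, LinearMap.add_apply, smul_eq_mul, mul_one, carlitz_mul_apply,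
      carlitz_apply_comm τ ν X]
    abel

lemma carlitz_deriv_of_mem_ker (hDτ : ∀ x, D (τ x) = τ (D x)) (hDν : D ν = 1)
    {a : (kfix τ)[X]} {w : F} (hw : carlitz τ ν a w = 0) :
    carlitz τ ν a (D w) = -carlitz τ ν (polyDeriv D hDτ a) w := by
  have h := deriv_carlitz_apply τ ν D hDτ hDν a w
  rw [hw, map_zero] at h
  exact eq_neg_of_add_eq_zero_left h.symm

lemma deriv_mem_ker_carlitz_pow_succ (hDτ : ∀ x, D (τ x) = τ (D x)) (hDν : D ν = 1)
    (P : (kfix τ)[X]) (s : ℕ) {x : F} (hx : carlitz τ ν (P ^ s) x = 0) :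
    carlitz τ ν (P ^ (s + 1)) (D x) = 0 := by
  have hdvd : P ^ s ∣ polyDeriv D hDτ (P ^ (s + 1)) := by
    rw [Derivation.leibniz_pow, Nat.add_sub_cancel, smul_eq_mul, nsmul_eq_mul]
    exact (dvd_mul_right _ _).mul_left _
  rw [carlitz_deriv_of_mem_ker τ ν D hDτ hDν
      (carlitz_apply_eq_zero_of_dvd τ ν (pow_dvd_pow P s.le_succ) hx),
    carlitz_apply_eq_zero_of_dvd τ ν hdvd hx, neg_zero]

lemma iterate_deriv_mem_ker_carlitz_pow (hDτ : ∀ x, D (τ x) = τ (D x)) (hDν : D ν = 1)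
    (P : (kfix τ)[X]) {z : F} (hz : carlitz τ ν P z = 0) {j r : ℕ} (hjr : j < r) :
    carlitz τ ν (P ^ r) (D^[j] z) = 0 := by
  have hsucc : ∀ j, carlitz τ ν (P ^ (j + 1)) (D^[j] z) = 0 := by
    intro j
    induction j with
    | zero => simpa using hz
    | succ j ih =>
      rw [Function.iterate_succ_apply']
      exact deriv_mem_ker_carlitz_pow_succ τ ν D hDτ hDν P _ ih
  exact carlitz_apply_eq_zero_of_dvd τ ν (pow_dvd_pow P hjr) (hsucc j)

lemma carlitz_pow_iterate_deriv (hDτ : ∀ x, D (τ x) = τ (D x)) (hDν : D ν = 1)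
    (P : (kfix τ)[X]) {z : F} (hz : carlitz τ ν P z = 0) (s : ℕ) :
    carlitz τ ν (P ^ s) (D^[s] z) =
      carlitz τ ν (s.factorial • (-polyDeriv D hDτ P) ^ s) z := by
  induction s with
  | zero => simp
  | succ s ih =>
    have hw := iterate_deriv_mem_ker_carlitz_pow τ ν D hDτ hDν P hz s.lt_succ_self
    rw [Function.iterate_succ_apply', carlitz_deriv_of_mem_ker τ ν D hDτ hDν hw,
      (polyDeriv D hDτ).leibniz_pow P (s + 1), Nat.add_sub_cancel]
    set δP := polyDeriv D hDτ P
    calc -carlitz τ ν ((s + 1) • P ^ s • δP) (D^[s] z)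
        = -carlitz τ ν ((s + 1) • δP) (carlitz τ ν (P ^ s) (D^[s] z)) := by
          rw [← carlitz_mul_apply, smul_eq_mul, smul_mul_assoc, mul_comm]
      _ = carlitz τ ν ((s + 1).factorial • (-δP) ^ (s + 1)) z := by
          rw [ih, ← carlitz_mul_apply, ← LinearMap.neg_apply, ← map_neg, Nat.factorial_succ]
          congr 2
          simp only [nsmul_eq_mul]
          push_cast
          ring

lemma linearIndependent_iterate_deriv [CharZero F] (hDτ : ∀ x, D (τ x) = τ (D x))
    (hDν : D ν = 1) {P : (kfix τ)[X]} (hP : IsCoprime P (polyDeriv D hDτ P))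
    {ι : Type*} [Fintype ι] {y : ι → F} (hy : LinearIndependent (kfix τ) y)
    (hyP : ∀ i, carlitz τ ν P (y i) = 0) (m : ℕ) :
    LinearIndependent (kfix τ) fun p : ι × Fin m => D^[p.2] (y p.1) := by
  induction m with
  | zero => exact linearIndependent_empty_type
  | succ m ih =>
    refine ih.of_castSucc_of_map_last (carlitz τ ν (P ^ m)) (fun i j =>
      iterate_deriv_mem_ker_carlitz_pow τ ν D hDτ hDν P (hyP i) j.isLt) ?_
    simp only [Fin.val_last, carlitz_pow_iterate_deriv τ ν D hDτ hDν P (hyP _)]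
    refine hy.map (f := carlitz τ ν _) ?_
    refine (disjoint_ker_carlitz τ ν (a := P) ?_).mono_left
      (Submodule.span_le.2 (Set.range_subset_iff.2 hyP))
    have hunit : IsUnit (m.factorial : (kfix τ)[X]) := by
      rw [← map_natCast C]
      exact isUnit_C.2 (Nat.cast_ne_zero.2 m.factorial_ne_zero).isUnit
    rw [nsmul_eq_mul, isCoprime_mul_unit_left_right hunit]
    exact hP.neg_right.pow_right

lemma finiteDimensional_ker_carlitz {a : (kfix τ)[X]} (ha : a ≠ 0)
    (hdim : Module.finrank (kfix τ) (LinearMap.ker (carlitz τ ν a)) = a.natDegree) :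
    FiniteDimensional (kfix τ) (LinearMap.ker (carlitz τ ν a)) := by
  -- `finrank` is `0` on infinite-dimensional spaces, so degree `0` needs its own argument.
  rcases Nat.eq_zero_or_pos a.natDegree with hdeg | hdeg
  · rw [eq_C_of_natDegree_eq_zero hdeg] at ha ⊢
    have hker : LinearMap.ker (carlitz τ ν (C (a.coeff 0))) = ⊥ := by
      ext x
      simp [carlitz_C_apply, C_ne_zero.1 ha]
    rw [hker]
    infer_instance
  · exact Module.finite_of_finrank_pos (hdim ▸ hdeg)

end Carlitz

theorem stmt_5_general {F : Type*} [Field F] [CharZero F] (τ : F →+* F) (ν : F)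
    (D : Derivation ℤ F F) (hDτ : ∀ x : F, D (τ x) = τ (D x)) (hDν : D ν = 1)
    (hdim : ∀ a : Polynomial (kfix τ), a ≠ 0 →
      Module.finrank (kfix τ) (LinearMap.ker (carlitz τ ν a)) = a.natDegree)
    (P : Polynomial (kfix τ)) (hPmonic : P.Monic)
    (hDP : ∀ DP : Polynomial (kfix τ),
      (∀ i : ℕ, (DP.coeff i : F) = D ((P.coeff i : F)) + ((derivative P).coeff i : F)) →
      IsCoprime P DP)
    (n : ℕ) (hn : n = P.natDegree) (y : Fin n → F)
    (hyli : LinearIndependent (kfix τ) y)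
    (hyspan : Submodule.span (kfix τ) (Set.range y) = LinearMap.ker (carlitz τ ν P))
    (r : ℕ) :
    (∀ (i : Fin n) (j : Fin r), (⇑D)^[(j : ℕ)] (y i) ∈ LinearMap.ker (carlitz τ ν (P ^ r)))
    ∧ LinearIndependent (kfix τ) (fun p : Fin n × Fin r => (⇑D)^[(p.2 : ℕ)] (y p.1))
    ∧ Submodule.span (kfix τ) (Set.range (fun p : Fin n × Fin r => (⇑D)^[(p.2 : ℕ)] (y p.1))) =
        LinearMap.ker (carlitz τ ν (P ^ r)) := by
  have hP : IsCoprime P (polyDeriv D hDτ P) := hDP _ (coe_coeff_polyDeriv D hDτ P)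
  have hyP : ∀ i, carlitz τ ν P (y i) = 0 := fun i =>
    LinearMap.mem_ker.1 (hyspan ▸ Submodule.subset_span (Set.mem_range_self i))
  have hmem : ∀ (i : Fin n) (j : Fin r),
      (⇑D)^[(j : ℕ)] (y i) ∈ LinearMap.ker (carlitz τ ν (P ^ r)) := fun i j =>
    iterate_deriv_mem_ker_carlitz_pow τ ν D hDτ hDν P (hyP i) j.isLt
  have hli := linearIndependent_iterate_deriv τ ν D hDτ hDν hP hyli hyP r
  refine ⟨hmem, hli, ?_⟩
  have hPr : P ^ r ≠ 0 := pow_ne_zero r hPmonic.ne_zero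
  have := finiteDimensional_ker_carlitz τ ν hPr (hdim _ hPr)
  refine Submodule.eq_of_le_of_finrank_le
    (Submodule.span_le.2 (Set.range_subset_iff.2 fun p => hmem p.1 p.2)) ?_
  rw [hdim _ hPr, natDegree_pow, finrank_span_eq_card hli, Fintype.card_prod, Fintype.card_fin,
    Fintype.card_fin, hn, mul_comm]

/-- if `P ∈ k[t]` is monic irreducible with `P` and `D(P)` coprime,
`n = deg P`, and `y_1, …, y_n` is a `k`-basis of `Λ_P`, then for every `r ≥ 1` the
elements `D^j(y_i)` (`1 ≤ i ≤ n`, `0 ≤ j ≤ r−1`) form a `k`-basis of `Λ_{P^r}`. -/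
theorem stmt_5 {F : Type*} [Field F] [CharZero F] (τ : F →+* F) (ν : F)
    (hν : τ ν = ν + 1)
    (D : Derivation ℤ F F) (hDτ : ∀ x : F, D (τ x) = τ (D x)) (hDν : D ν = 1)
    (hdim : ∀ a : Polynomial (kfix τ), a ≠ 0 →
      Module.finrank (kfix τ) (LinearMap.ker (carlitz τ ν a)) = a.natDegree)
    (P : Polynomial (kfix τ)) (hPmonic : P.Monic) (hPirr : Irreducible P)
    (hDP : ∀ DP : Polynomial (kfix τ),
      (∀ i : ℕ, (DP.coeff i : F) = D ((P.coeff i : F)) + ((derivative P).coeff i : F)) →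
      IsCoprime P DP)
    (n : ℕ) (hn : n = P.natDegree) (y : Fin n → F)
    (hyli : LinearIndependent (kfix τ) y)
    (hyspan : Submodule.span (kfix τ) (Set.range y) = LinearMap.ker (carlitz τ ν P))
    (r : ℕ) (hr : 1 ≤ r) :
    (∀ (i : Fin n) (j : Fin r), (⇑D)^[(j : ℕ)] (y i) ∈ LinearMap.ker (carlitz τ ν (P ^ r)))
    ∧ LinearIndependent (kfix τ) (fun p : Fin n × Fin r => (⇑D)^[(p.2 : ℕ)] (y p.1))
    ∧ Submodule.span (kfix τ) (Set.range (fun p : Fin n × Fin r => (⇑D)^[(p.2 : ℕ)] (y p.1))) =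
        LinearMap.ker (carlitz τ ν (P ^ r)) :=
  stmt_5_general τ ν D hDτ hDν hdim P hPmonic hDP n hn y hyli hyspan r
end
end

section
/- Let k be a field, A = k[t] the polynomial ring, and M an A-module. For a ∈ A write M[a] := { m ∈ M : a • m = 0 }, an A-submodule and in particular a k-vector space. Assume that dim_k M[a] = deg(a) for every nonzero a ∈ A. Then for every nonzero a ∈ A the A-module M[a] is isomorphic to A/(a). -/
/-!
Over the PID `k[X]`, the finitely generated torsion module `M[a]` contains an element `x` whose
annihilator is the annihilator `(d)` of the whole of `M[a]`. Then `d ∣ a` and `M[d] = M[a]`, so the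
dimension hypothesis gives `deg d = deg a`, i.e. `(d) = (a)`. Hence `r ↦ r • x` embeds `k[X]/(a)`
into `M[a]`, and this is an isomorphism because both sides have `k`-dimension `deg a`.
-/

open Polynomial

theorem Submodule.torsionBy_eq_of_dvd_of_mem_annihilator {R M : Type*} [CommRing R]
    [AddCommGroup M] [Module R M] {a d : R} (hda : d ∣ a)
    (hd : d ∈ Module.annihilator R (torsionBy R M a)) :
    torsionBy R M d = torsionBy R M a := by
  refine le_antisymm (torsionBy_le_torsionBy_of_dvd _ _ hda) fun m hm ↦ ?_
  rw [mem_torsionBy_iff]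
  exact congr_arg Subtype.val (Module.mem_annihilator.mp hd ⟨m, hm⟩)

namespace Polynomial

variable {k : Type*} [Field k]

theorem nonempty_linearEquiv_quotient_of_torsionOf_eq {N : Type*} [AddCommGroup N]
    [Module k[X] N] [Module k N] [IsScalarTower k k[X] N] [FiniteDimensional k N] {a : k[X]}
    {x : N} (hx : Ideal.torsionOf k[X] N x = Ideal.span {a})
    (hN : Module.finrank k N = a.natDegree) :
    Nonempty (N ≃ₗ[k[X]] k[X] ⧸ Ideal.span {a}) := by
  let g := (Ideal.span {a}).liftQ (LinearMap.toSpanSingleton k[X] N x) hx.ge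
  have hinj : Function.Injective g :=
    LinearMap.ker_eq_bot.mp (Submodule.ker_liftQ_eq_bot' _ _ hx.symm)
  have : FiniteDimensional k (k[X] ⧸ Ideal.span {a}) :=
    Module.Finite.of_injective (g.restrictScalars k) hinj
  have hsurj : Function.Surjective g :=
    (LinearMap.injective_iff_surjective_of_finrank_eq_finrank (f := g.restrictScalars k)
      (by rw [finrank_quotient_span_eq_natDegree, hN])).mp hinj
  exact ⟨(LinearEquiv.ofBijective g ⟨hinj, hsurj⟩).symm⟩

variable (k) in
def TorsionByFinrankEqNatDegree (M : Type*) [AddCommGroup M] [Module k[X] M] [Module k M]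
    [IsScalarTower k k[X] M] : Prop :=
  ∀ a : k[X], a ≠ 0 →
    Module.finrank k ((Submodule.torsionBy k[X] M a).restrictScalars k) = a.natDegree

variable {M : Type*} [AddCommGroup M] [Module k[X] M] [Module k M] [IsScalarTower k k[X] M]

theorem TorsionByFinrankEqNatDegree.finiteDimensional (hM : TorsionByFinrankEqNatDegree k M)
    {a : k[X]} (ha : a ≠ 0) : FiniteDimensional k (Submodule.torsionBy k[X] M a) := by
  -- `finrank` is `0` on infinite-dimensional spaces, so pass to `M[aX]`, of finrank `deg a + 1`.
  have hpos : 0 < Module.finrank k ((Submodule.torsionBy k[X] M (a * X)).restrictScalars k) := by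
    rw [hM _ (mul_ne_zero ha X_ne_zero), natDegree_mul_X ha]
    exact Nat.succ_pos _
  have := FiniteDimensional.of_finrank_pos hpos
  exact Submodule.finiteDimensional_of_le ((Submodule.restrictScalars_le k).mpr
    (Submodule.torsionBy_le_torsionBy_of_dvd _ _ (dvd_mul_right a X)))

theorem TorsionByFinrankEqNatDegree.exists_torsionOf_eq_span
    (hM : TorsionByFinrankEqNatDegree k M) {a : k[X]} (ha : a ≠ 0) :
    ∃ x : Submodule.torsionBy k[X] M a,
      Ideal.torsionOf k[X] (Submodule.torsionBy k[X] M a) x = Ideal.span {a} := by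
  have := hM.finiteDimensional ha
  have := Module.Finite.of_restrictScalars_finite k k[X] (Submodule.torsionBy k[X] M a)
  obtain ⟨x, hx⟩ := Module.exists_ker_toSpanSingleton_eq_annihilator
    (R := k[X]) (M := Submodule.torsionBy k[X] M a)
  set d := Submodule.IsPrincipal.generator (Module.annihilator k[X] (Submodule.torsionBy k[X] M a))
  have hspan : Ideal.span {d} = Module.annihilator k[X] (Submodule.torsionBy k[X] M a) :=
    Submodule.IsPrincipal.span_singleton_generator _
  have hda : d ∣ a := by
    rw [← Ideal.mem_span_singleton, hspan, ← Module.isTorsionBy_iff_mem_annihilator]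
    exact Submodule.torsionBy_isTorsionBy a
  have hd : Submodule.torsionBy k[X] M d = Submodule.torsionBy k[X] M a :=
    Submodule.torsionBy_eq_of_dvd_of_mem_annihilator hda (Submodule.IsPrincipal.generator_mem _)
  have hdeg : a.natDegree ≤ d.natDegree := by
    rw [← hM a ha, ← hd, hM d (ne_zero_of_dvd_ne_zero ha hda)]
  refine ⟨x, hx.trans ?_⟩
  rw [← hspan]
  exact Ideal.span_singleton_eq_span_singleton.mpr (associated_of_dvd_of_natDegree_le hda ha hdeg)

end Polynomial

/-- if `M` is a module over `A = k[t]` such that the `a`-torsion submodule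
`M[a] = {m : a • m = 0}` has `k`-dimension `deg a` for every nonzero `a`, then
`M[a] ≅ A/(a)` as `A`-modules for every nonzero `a`. -/
theorem stmt_6 (k : Type*) [Field k] (M : Type*) [AddCommGroup M]
    [Module (Polynomial k) M] [Module k M] [IsScalarTower k (Polynomial k) M]
    (hdim : ∀ a : Polynomial k, a ≠ 0 →
      Module.finrank k ((Submodule.torsionBy (Polynomial k) M a).restrictScalars k) =
        a.natDegree)
    (a : Polynomial k) (ha : a ≠ 0) :
    Nonempty ((Submodule.torsionBy (Polynomial k) M a) ≃ₗ[Polynomial k]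
      (Polynomial k ⧸ Ideal.span ({a} : Set (Polynomial k)))) := by
  have hM : TorsionByFinrankEqNatDegree k M := hdim
  have := hM.finiteDimensional ha
  obtain ⟨x, hx⟩ := hM.exists_torsionOf_eq_span ha
  -- `by exact` postpones `hdim a ha`, whose type would otherwise impose on `N` the `k`-module
  -- structure of the `k`-submodule `restrictScalars k`.
  exact nonempty_linearEquiv_quotient_of_torsionOf_eq hx (by exact hdim a ha)
end

section
/- Let k be a field, A = k[t], and M an A-module with M[a] := { m ∈ M : a • m = 0 }; assume dim_k M[a] = deg(a) for every nonzero a ∈ A. Let a ∈ A be nonzero. Then M[a] is a cyclic A-module, and for any generator m of M[a] the map b ↦ b • m induces a bijection from the group of units of the quotient ring A/(a) onto the set of elements of M[a] that generate M[a] as an A-module. -/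
set_option synthInstance.maxHeartbeats 1000000

open Polynomial Module

namespace Stmt8Aux

variable {k : Type*} [Field k] {M : Type*} [AddCommGroup M]
  [Module (Polynomial k) M] [Module k M] [IsScalarTower k (Polynomial k) M]

/-- A nonzero polynomial of `natDegree` zero is a unit. -/
theorem isUnit_of_natDegree_eq_zero {a : Polynomial k} (ha : a ≠ 0) (h0 : a.natDegree = 0) :
    IsUnit a := by
  rw [Polynomial.isUnit_iff_degree_eq_zero, Polynomial.degree_eq_natDegree ha, h0]
  rfl

theorem natDegree_pos_of_not_isUnit {a : Polynomial k} (ha : a ≠ 0) (hu : ¬IsUnit a) :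
    0 < a.natDegree :=
  Nat.pos_of_ne_zero fun h => hu (isUnit_of_natDegree_eq_zero ha h)

/-- scalar commutation for the tower `k → k[t] → M`. -/
theorem smul_comm' (r : k) (b : Polynomial k) (x : M) : b • r • x = r • b • x := by
  rw [← algebraMap_smul (Polynomial k) r x, ← mul_smul, mul_comm, mul_smul, algebraMap_smul]

/-- torsion by a nonzero constant is trivial. -/
theorem torsionBy_const {a : Polynomial k} (ha : a ≠ 0) (h0 : a.natDegree = 0) :
    Submodule.torsionBy (Polynomial k) M a = ⊥ := by
  ext x
  simp only [Submodule.mem_torsionBy_iff, Submodule.mem_bot]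
  constructor
  · intro hx
    have hC : a = C (a.coeff 0) := Polynomial.eq_C_of_natDegree_eq_zero h0
    have hc : a.coeff 0 ≠ 0 := fun h => ha (by rw [hC, h, map_zero])
    have h1 : (a.coeff 0) • x = 0 := by
      rw [← algebraMap_smul (Polynomial k) (a.coeff 0) x]
      rw [show (algebraMap k (Polynomial k)) (a.coeff 0) = C (a.coeff 0) from rfl, ← hC]
      exact hx
    have := congrArg (fun y => (a.coeff 0)⁻¹ • y) h1
    simpa [inv_smul_smul₀ hc] using this
  · rintro rfl; exact smul_zero a

section hdim

variable (hdim : ∀ a : Polynomial k, a ≠ 0 →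
      Module.finrank k ((Submodule.torsionBy (Polynomial k) M a).restrictScalars k) =
        a.natDegree)

include hdim

theorem finrankT (a : Polynomial k) (ha : a ≠ 0) :
    Module.finrank k (Submodule.torsionBy (Polynomial k) M a) = a.natDegree := by
  rw [← hdim a ha]
  exact (LinearEquiv.finrank_eq
    ((Submodule.restrictScalarsEquiv k (Polynomial k) M
      (Submodule.torsionBy (Polynomial k) M a)).restrictScalars k)).symm

theorem findimT (a : Polynomial k) (ha : a ≠ 0) (h1 : 0 < a.natDegree) :
    FiniteDimensional k (Submodule.torsionBy (Polynomial k) M a) :=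
  FiniteDimensional.of_finrank_pos (by rw [finrankT hdim a ha]; exact h1)

/-- If every polynomial killing `m` is divisible by `a`, then `m` generates `M[a]`. -/
theorem gen_of_ann (a : Polynomial k) (ha : a ≠ 0) (h1 : 0 < a.natDegree)
    (m : Submodule.torsionBy (Polynomial k) M a)
    (hann : ∀ c : Polynomial k, c • m = 0 → a ∣ c) :
    ∀ x : Submodule.torsionBy (Polynomial k) M a, ∃ b : Polynomial k, x = b • m := by
  haveI := findimT hdim a ha h1
  set n := a.natDegree with hn
  let ψ : Polynomial.degreeLT k n →ₗ[k] (Submodule.torsionBy (Polynomial k) M a) :=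
    { toFun := fun c => c.1 • m
      map_add' := fun c c' => by
        rw [Submodule.coe_add, add_smul]
      map_smul' := fun r c => by
        rw [SetLike.val_smul, RingHom.id_apply]
        exact smul_assoc r (c : Polynomial k) m }
  have hinj : Function.Injective ψ := by
    rw [injective_iff_map_eq_zero]
    intro c hc
    have hdvd : a ∣ (c : Polynomial k) := hann _ hc
    have hdeg : (c : Polynomial k).degree < a.degree := by
      rw [Polynomial.degree_eq_natDegree ha, ← hn]
      exact Polynomial.mem_degreeLT.mp c.2
    have : (c : Polynomial k) = 0 := Polynomial.eq_zero_of_dvd_of_degree_lt hdvd hdeg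
    exact Subtype.ext this
  haveI : FiniteDimensional k (Polynomial.degreeLT k n) :=
    Module.Finite.equiv (Polynomial.degreeLTEquiv k n).symm
  have hfr : Module.finrank k (Polynomial.degreeLT k n) =
      Module.finrank k (Submodule.torsionBy (Polynomial k) M a) := by
    rw [LinearEquiv.finrank_eq (Polynomial.degreeLTEquiv k n), Module.finrank_fin_fun,
      finrankT hdim a ha]
  have hsurj : Function.Surjective ψ :=
    (LinearMap.injective_iff_surjective_of_finrank_eq_finrank hfr).mp hinj
  intro x
  obtain ⟨c, hc⟩ := hsurj x
  exact ⟨(c : Polynomial k), hc.symm⟩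

/-- A generator of `M[b]` is killed only by multiples of `b`. -/
theorem dvd_of_gen (b : Polynomial k) (hb : b ≠ 0)
    (m' : Submodule.torsionBy (Polynomial k) M b)
    (hgen : ∀ x : Submodule.torsionBy (Polynomial k) M b, ∃ c : Polynomial k, x = c • m')
    (c : Polynomial k) (hc : c • m' = 0) : b ∣ c := by
  classical
  have hkill : ∀ x : Submodule.torsionBy (Polynomial k) M b, c • x = 0 := by
    intro x
    obtain ⟨e, he⟩ := hgen x
    rw [he, smul_comm, hc, smul_zero]
  set d := EuclideanDomain.gcd b c with hd
  have hdb : d ∣ b := EuclideanDomain.gcd_dvd_left b c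
  have hdc : d ∣ c := EuclideanDomain.gcd_dvd_right b c
  have hd0 : d ≠ 0 := fun h => hb ((EuclideanDomain.gcd_eq_zero_iff.mp h).1)
  suffices hbd : b ∣ d from hbd.trans hdc
  have hdkill : ∀ x : Submodule.torsionBy (Polynomial k) M b, d • x = 0 := by
    intro x
    have hab : d = b * EuclideanDomain.gcdA b c + c * EuclideanDomain.gcdB b c :=
      EuclideanDomain.gcd_eq_gcd_ab b c
    have h1 : (b * EuclideanDomain.gcdA b c) • x = 0 := by
      rw [mul_comm, mul_smul, Submodule.smul_torsionBy, smul_zero]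
    have h2 : (c * EuclideanDomain.gcdB b c) • x = 0 := by
      rw [mul_comm, mul_smul, hkill, smul_zero]
    rw [hab, add_smul, h1, h2, add_zero]
  have hle : Submodule.torsionBy (Polynomial k) M b ≤ Submodule.torsionBy (Polynomial k) M d := by
    intro x hx
    rw [Submodule.mem_torsionBy_iff]
    exact Subtype.ext_iff.mp (hdkill ⟨x, hx⟩)
  by_cases hd1 : d.natDegree = 0
  · -- then `M[d] = 0`, so `M[b] = 0`, so `b` is a unit
    have hTd : Submodule.torsionBy (Polynomial k) M d = ⊥ := torsionBy_const hd0 hd1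
    have hTb : Submodule.torsionBy (Polynomial k) M b = ⊥ :=
      le_bot_iff.mp (hTd ▸ hle)
    have hb0 : b.natDegree = 0 := by
      have := hdim b hb
      rw [hTb, Submodule.restrictScalars_bot, finrank_bot] at this
      exact this.symm
    exact (isUnit_of_natDegree_eq_zero hb hb0).dvd
  · have h1d : 0 < d.natDegree := Nat.pos_of_ne_zero hd1
    haveI := findimT hdim d hd0 h1d
    have hmono : b.natDegree ≤ d.natDegree := by
      rw [← hdim b hb, ← hdim d hd0]
      haveI : Module.Finite k
          ((Submodule.torsionBy (Polynomial k) M d).restrictScalars k) :=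
        FiniteDimensional.of_finrank_pos (by rw [hdim d hd0]; exact h1d)
      exact Submodule.finrank_mono (fun x hx => hle hx)
    have hdlb : d.natDegree ≤ b.natDegree := Polynomial.natDegree_le_of_dvd hdb hb
    obtain ⟨e, he⟩ := hdb
    have he0 : e ≠ 0 := by rintro rfl; rw [mul_zero] at he; exact hb he
    have hedeg : e.natDegree = 0 := by
      have hmul : b.natDegree = d.natDegree + e.natDegree := by
        rw [he, Polynomial.natDegree_mul hd0 he0]
      omega
    obtain ⟨u, hu⟩ := isUnit_of_natDegree_eq_zero he0 hedeg
    exact ⟨(u⁻¹ : (Polynomial k)ˣ), by rw [he, ← hu, mul_assoc, Units.mul_inv, mul_one]⟩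


/-- Main existence result: `M[a]` is cyclic. -/
theorem exists_gen (a : Polynomial k) (ha : a ≠ 0) :
    ∃ m : Submodule.torsionBy (Polynomial k) M a,
      ∀ x : Submodule.torsionBy (Polynomial k) M a, ∃ b : Polynomial k, x = b • m := by
  suffices H : ∀ n : ℕ, ∀ a : Polynomial k, a ≠ 0 → a.natDegree ≤ n →
      ∃ m : Submodule.torsionBy (Polynomial k) M a,
        ∀ x : Submodule.torsionBy (Polynomial k) M a, ∃ b : Polynomial k, x = b • m by
    exact H a.natDegree a ha le_rfl
  intro n
  induction n using Nat.strong_induction_on with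
  | _ n IH =>
  intro a ha hn
  rcases Nat.eq_zero_or_pos a.natDegree with h0 | h1
  · refine ⟨0, fun x => ⟨0, ?_⟩⟩
    have hx : (x : M) ∈ (⊥ : Submodule (Polynomial k) M) := by
      rw [← torsionBy_const ha h0]; exact x.2
    have hx0 : (x : M) = 0 := (Submodule.mem_bot _).mp hx
    apply Subtype.ext
    simpa using hx0
  · have hnu : ¬IsUnit a := fun h => by
      rw [Polynomial.isUnit_iff_degree_eq_zero, Polynomial.degree_eq_natDegree ha] at h
      have : a.natDegree = 0 := by exact_mod_cast h
      omega
    obtain ⟨p, hp_irr, hpa⟩ := WfDvdMonoid.exists_irreducible_factor hnu ha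
    obtain ⟨b, hab⟩ := hpa
    have hp0 : p ≠ 0 := hp_irr.ne_zero
    have hb0 : b ≠ 0 := by rintro rfl; rw [mul_zero] at hab; exact ha hab
    have hpdeg : 0 < p.natDegree := natDegree_pos_of_not_isUnit hp0 hp_irr.not_isUnit
    have hadeg : a.natDegree = p.natDegree + b.natDegree := by
      rw [hab, Polynomial.natDegree_mul hp0 hb0]
    by_cases hpb : p ∣ b
    · -- Case A : `p ∣ b`.
      have hbdeg : 0 < b.natDegree :=
        lt_of_lt_of_le hpdeg (Polynomial.natDegree_le_of_dvd hpb hb0)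
      obtain ⟨m', hm'⟩ := IH b.natDegree (by omega) b hb0 le_rfl
      haveI hfinA := findimT hdim a ha h1
      haveI hfinB := findimT hdim b hb0 hbdeg
      have haM : ∀ x : Submodule.torsionBy (Polynomial k) M a, a • (x : M) = 0 :=
        fun x => (Submodule.mem_torsionBy_iff _ _).mp x.2
      let f : (Submodule.torsionBy (Polynomial k) M a) →ₗ[k]
          (Submodule.torsionBy (Polynomial k) M b) :=
        { toFun := fun x => ⟨p • (x : M), by
            rw [Submodule.mem_torsionBy_iff, smul_smul,
              show b * p = a from by rw [hab, mul_comm]]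
            exact haM x⟩
          map_add' := fun x y => by
            apply Subtype.ext
            simp [smul_add]
          map_smul' := fun r x => by
            apply Subtype.ext
            simp only [RingHom.id_apply, SetLike.val_smul_of_tower]
            exact smul_comm' r p (x : M) }
      have hle : Submodule.torsionBy (Polynomial k) M p ≤ Submodule.torsionBy (Polynomial k) M a :=
        Submodule.torsionBy_le_torsionBy_of_dvd p a ⟨b, hab⟩
      let e : (LinearMap.ker f) ≃ₗ[k] (Submodule.torsionBy (Polynomial k) M p) :=
        { toFun := fun x => ⟨((x : Submodule.torsionBy (Polynomial k) M a) : M), by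
            rw [Submodule.mem_torsionBy_iff]
            exact Subtype.ext_iff.mp (LinearMap.mem_ker.mp x.2)⟩
          map_add' := fun x y => rfl
          map_smul' := fun r x => rfl
          invFun := fun y => ⟨⟨(y : M), hle y.2⟩, by
            apply LinearMap.mem_ker.mpr
            apply Subtype.ext
            exact (Submodule.mem_torsionBy_iff _ _).mp y.2⟩
          left_inv := fun x => by apply Subtype.ext; apply Subtype.ext; rfl
          right_inv := fun y => rfl }
      have hkfr : Module.finrank k (LinearMap.ker f) = p.natDegree := by
        rw [LinearEquiv.finrank_eq e, finrankT hdim p hp0]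
      have hrn := LinearMap.finrank_range_add_finrank_ker f
      have hrfr : Module.finrank k (LinearMap.range f) = b.natDegree := by
        rw [hkfr, finrankT hdim a ha] at hrn; omega
      have hrange : LinearMap.range f = ⊤ :=
        Submodule.eq_top_of_finrank_eq (by rw [hrfr, finrankT hdim b hb0])
      obtain ⟨mm, hmm⟩ := (LinearMap.range_eq_top.mp hrange) m'
      have hpm : p • (mm : M) = (m' : M) := Subtype.ext_iff.mp hmm
      refine ⟨mm, gen_of_ann hdim a ha h1 mm ?_⟩
      intro c hc
      have hcM : c • (mm : M) = 0 := by
        have := Subtype.ext_iff.mp hc; simpa using this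
      have hcm' : c • m' = (0 : Submodule.torsionBy (Polynomial k) M b) := by
        apply Subtype.ext
        simp only [SetLike.val_smul, ZeroMemClass.coe_zero]
        rw [← hpm, smul_smul, mul_comm, mul_smul, hcM, smul_zero]
      have hbc : b ∣ c := dvd_of_gen hdim b hb0 m' hm' c hcm'
      obtain ⟨c', hcc⟩ := hbc
      have hbm : b • (mm : M) ≠ 0 := by
        intro hz
        obtain ⟨b₁, hb₁⟩ := hpb
        have hb₁0 : b₁ ≠ 0 := by rintro rfl; rw [mul_zero] at hb₁; exact hb0 hb₁
        have hkill : b₁ • m' = (0 : Submodule.torsionBy (Polynomial k) M b) := by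
          apply Subtype.ext
          simp only [SetLike.val_smul, ZeroMemClass.coe_zero]
          rw [← hpm, smul_smul, show b₁ * p = b from by rw [hb₁, mul_comm], hz]
        have hbb₁ : b ∣ b₁ := dvd_of_gen hdim b hb0 m' hm' b₁ hkill
        have hd1 : b.natDegree ≤ b₁.natDegree := Polynomial.natDegree_le_of_dvd hbb₁ hb₁0
        have hd2 : b.natDegree = p.natDegree + b₁.natDegree := by
          rw [hb₁, Polynomial.natDegree_mul hp0 hb₁0]
        omega
      have hpc' : p ∣ c' := by
        by_contra hnp
        obtain ⟨u', v', huv⟩ := (hp_irr.coprime_iff_not_dvd.mpr hnp)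
        apply hbm
        calc b • (mm : M) = (1 : Polynomial k) • (b • (mm : M)) := (one_smul _ _).symm
          _ = (u' * p + v' * c') • (b • (mm : M)) := by rw [huv]
          _ = 0 := by
              rw [add_smul, smul_smul, smul_smul,
                show u' * p * b = u' * a from by rw [hab]; ring,
                show v' * c' * b = v' * c from by rw [hcc]; ring,
                mul_smul, mul_smul, hcM, haM mm, smul_zero, smul_zero, add_zero]
      obtain ⟨c'', hc''⟩ := hpc'
      exact ⟨c'', by rw [hcc, hc'', hab]; ring⟩
    · by_cases hbu : IsUnit b
      · -- `a` is (an associate of) a prime.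
        obtain ⟨v, hv⟩ := hbu
        have hap : a ∣ p :=
          ⟨((v⁻¹ : (Polynomial k)ˣ) : Polynomial k), by
            rw [hab, ← hv, mul_assoc, Units.mul_inv, mul_one]⟩
        have hpkill : ∀ x : Submodule.torsionBy (Polynomial k) M a, p • x = 0 := by
          intro x
          obtain ⟨w, hw⟩ := hap
          rw [hw, mul_comm, mul_smul, Submodule.smul_torsionBy, smul_zero]
        haveI := findimT hdim a ha h1
        have hnt : Nontrivial (Submodule.torsionBy (Polynomial k) M a) := by
          apply Module.nontrivial_of_finrank_pos (R := k)
          rw [finrankT hdim a ha]; exact h1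
        obtain ⟨m, hm0⟩ := exists_ne (0 : Submodule.torsionBy (Polynomial k) M a)
        refine ⟨m, gen_of_ann hdim a ha h1 m ?_⟩
        intro c hc
        have hpc : p ∣ c := by
          by_contra hpc
          obtain ⟨u', v', huv⟩ := (hp_irr.coprime_iff_not_dvd.mpr hpc)
          apply hm0
          calc m = (1 : Polynomial k) • m := (one_smul _ m).symm
            _ = (u' * p + v' * c) • m := by rw [huv]
            _ = 0 := by
                rw [add_smul, mul_smul, hpkill, smul_zero, mul_smul, hc, smul_zero, add_zero]
        exact hap.trans hpc
      · -- `p` and `b` are coprime non-units.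
        have hbdeg : 0 < b.natDegree := natDegree_pos_of_not_isUnit hb0 hbu
        obtain ⟨m₁, hm₁⟩ := IH p.natDegree (by omega) p hp0 le_rfl
        obtain ⟨m₂, hm₂⟩ := IH b.natDegree (by omega) b hb0 le_rfl
        have hm₁a : p • (m₁ : M) = 0 := (Submodule.mem_torsionBy_iff _ _).mp m₁.2
        have hm₂a : b • (m₂ : M) = 0 := (Submodule.mem_torsionBy_iff _ _).mp m₂.2
        have hmem : (m₁ : M) + m₂ ∈ Submodule.torsionBy (Polynomial k) M a := by
          have e1 : (p * b) • (m₁ : M) = 0 := by rw [mul_comm, mul_smul, hm₁a, smul_zero]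
          have e2 : (p * b) • (m₂ : M) = 0 := by rw [mul_smul, hm₂a, smul_zero]
          rw [Submodule.mem_torsionBy_iff, hab, smul_add, e1, e2, add_zero]
        refine ⟨⟨(m₁ : M) + m₂, hmem⟩, ?_⟩
        intro x
        obtain ⟨u', v', huv⟩ := (hp_irr.coprime_iff_not_dvd.mpr hpb)
        have hax : a • (x : M) = 0 := (Submodule.mem_torsionBy_iff _ _).mp x.2
        have hx₁ : (v' * b) • (x : M) ∈ Submodule.torsionBy (Polynomial k) M p := by
          rw [Submodule.mem_torsionBy_iff, smul_smul,
            show p * (v' * b) = v' * a from by rw [hab]; ring, mul_smul, hax, smul_zero]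
        have hx₂ : (u' * p) • (x : M) ∈ Submodule.torsionBy (Polynomial k) M b := by
          rw [Submodule.mem_torsionBy_iff, smul_smul,
            show b * (u' * p) = u' * a from by rw [hab]; ring, mul_smul, hax, smul_zero]
        obtain ⟨c, hc⟩ := hm₁ ⟨(v' * b) • (x : M), hx₁⟩
        obtain ⟨d, hd⟩ := hm₂ ⟨(u' * p) • (x : M), hx₂⟩
        have hc' : (v' * b) • (x : M) = c • (m₁ : M) := Subtype.ext_iff.mp hc
        have hd' : (u' * p) • (x : M) = d • (m₂ : M) := Subtype.ext_iff.mp hd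
        have hvb : (v' * b) • (m₁ : M) = m₁ := by
          rw [show v' * b = 1 - u' * p from by linear_combination huv, sub_smul, one_smul,
            mul_smul, hm₁a, smul_zero, sub_zero]
        have hup : (u' * p) • (m₂ : M) = m₂ := by
          rw [show u' * p = 1 - v' * b from by linear_combination huv, sub_smul, one_smul,
            mul_smul, hm₂a, smul_zero, sub_zero]
        refine ⟨c * (v' * b) + d * (u' * p), ?_⟩
        apply Subtype.ext
        have key : (c * (v' * b) + d * (u' * p)) • ((m₁ : M) + m₂) = (x : M) := by
          rw [smul_add, add_smul, add_smul]
          have t1 : (c * (v' * b)) • (m₁ : M) = (v' * b) • (x : M) := by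
            rw [mul_smul, hvb, ← hc']
          have t2 : (d * (u' * p)) • (m₁ : M) = 0 := by
            rw [show d * (u' * p) = d * u' * p from by ring, mul_smul, hm₁a, smul_zero]
          have t3 : (c * (v' * b)) • (m₂ : M) = 0 := by
            rw [show c * (v' * b) = c * v' * b from by ring, mul_smul, hm₂a, smul_zero]
          have t4 : (d * (u' * p)) • (m₂ : M) = (u' * p) • (x : M) := by
            rw [mul_smul, hup, ← hd']
          rw [t1, t2, t3, t4, add_zero, zero_add, ← add_smul,
            show v' * b + u' * p = 1 from by linear_combination huv, one_smul]
        rw [SetLike.val_smul]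
        exact key.symm


end hdim

end Stmt8Aux

/-- if `M` is a module over `A = k[t]` with `dim_k M[a] = deg a` for every
nonzero `a`, then for nonzero `a` the module `M[a]` is cyclic, and for any generator `m`
of `M[a]` the map `b ↦ b • m` induces a bijection from the units of `A/(a)` onto the set
of generators of `M[a]`. -/
theorem stmt_8 (k : Type*) [Field k] (M : Type*) [AddCommGroup M]
    [Module (Polynomial k) M] [Module k M] [IsScalarTower k (Polynomial k) M]
    (hdim : ∀ a : Polynomial k, a ≠ 0 →
      Module.finrank k ((Submodule.torsionBy (Polynomial k) M a).restrictScalars k) =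
        a.natDegree)
    (a : Polynomial k) (ha : a ≠ 0) :
    (∃ m : Submodule.torsionBy (Polynomial k) M a,
      ∀ x : Submodule.torsionBy (Polynomial k) M a, ∃ b : Polynomial k, x = b • m) ∧
    (∀ m : Submodule.torsionBy (Polynomial k) M a,
      (∀ x : Submodule.torsionBy (Polynomial k) M a, ∃ b : Polynomial k, x = b • m) →
      Set.BijOn
        (fun u : (Polynomial k ⧸ Ideal.span ({a} : Set (Polynomial k)))ˣ =>
          ((u : Polynomial k ⧸ Ideal.span ({a} : Set (Polynomial k))) • m :
            Submodule.torsionBy (Polynomial k) M a))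
        Set.univ
        {x : Submodule.torsionBy (Polynomial k) M a |
          ∀ y : Submodule.torsionBy (Polynomial k) M a, ∃ b : Polynomial k, y = b • x}) := by
  constructor
  · exact Stmt8Aux.exists_gen hdim a ha
  · intro m hgen
    have hann : ∀ c : Polynomial k, c • m = 0 → a ∣ c :=
      fun c hc => Stmt8Aux.dvd_of_gen hdim a ha m hgen c hc
    refine ⟨?_, ?_, ?_⟩
    · -- MapsTo
      intro u _
      simp only [Set.mem_setOf_eq]
      intro y
      obtain ⟨c, hc⟩ := hgen y
      obtain ⟨e, he⟩ := Ideal.Quotient.mk_surjective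
        ((Ideal.Quotient.mk (Ideal.span ({a} : Set (Polynomial k))) c) *
          ((u⁻¹ : (Polynomial k ⧸ Ideal.span ({a} : Set (Polynomial k)))ˣ) :
            Polynomial k ⧸ Ideal.span ({a} : Set (Polynomial k))))
      refine ⟨e, ?_⟩
      calc y = c • m := hc
        _ = (Ideal.Quotient.mk (Ideal.span ({a} : Set (Polynomial k))) c) • m :=
            (Submodule.torsionBy.mk_ideal_smul a c m).symm
        _ = ((Ideal.Quotient.mk (Ideal.span ({a} : Set (Polynomial k))) c) *
              ((u⁻¹ : (Polynomial k ⧸ Ideal.span ({a} : Set (Polynomial k)))ˣ) :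
                Polynomial k ⧸ Ideal.span ({a} : Set (Polynomial k))) *
              ((u : (Polynomial k ⧸ Ideal.span ({a} : Set (Polynomial k)))ˣ) :
                Polynomial k ⧸ Ideal.span ({a} : Set (Polynomial k)))) • m := by
            rw [mul_assoc, Units.inv_mul, mul_one]
        _ = _ := by
            rw [mul_smul, ← he, Submodule.torsionBy.mk_ideal_smul]
    · -- InjOn
      intro u _ v _ huv
      obtain ⟨b₁, hb₁⟩ := Ideal.Quotient.mk_surjective
        ((u : (Polynomial k ⧸ Ideal.span ({a} : Set (Polynomial k)))ˣ) :
          Polynomial k ⧸ Ideal.span ({a} : Set (Polynomial k)))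
      obtain ⟨b₂, hb₂⟩ := Ideal.Quotient.mk_surjective
        ((v : (Polynomial k ⧸ Ideal.span ({a} : Set (Polynomial k)))ˣ) :
          Polynomial k ⧸ Ideal.span ({a} : Set (Polynomial k)))
      have h1 : b₁ • m = b₂ • m := by
        rw [← Submodule.torsionBy.mk_ideal_smul a b₁ m,
          ← Submodule.torsionBy.mk_ideal_smul a b₂ m, hb₁, hb₂]
        exact huv
      have h2 : (b₁ - b₂) • m = 0 := by
        have hs := sub_smul b₁ b₂ m
        rw [hs, h1, sub_self]
      have h4 : (Ideal.Quotient.mk (Ideal.span ({a} : Set (Polynomial k)))) b₁ =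
          (Ideal.Quotient.mk (Ideal.span ({a} : Set (Polynomial k)))) b₂ := by
        rw [Ideal.Quotient.eq]
        exact Ideal.mem_span_singleton.mpr (hann _ h2)
      apply Units.ext
      rw [← hb₁, ← hb₂, h4]
    · -- SurjOn
      intro x hx
      obtain ⟨c, hc⟩ := hgen x
      obtain ⟨d, hd⟩ := hx m
      have h1 : (1 - d * c) • m = 0 := by
        have hs := sub_smul (1 : Polynomial k) (d * c) m
        rw [hs, one_smul, mul_smul, ← hc, ← hd, sub_self]
      have h2 : a ∣ 1 - d * c := hann _ h1
      have hmul : (Ideal.Quotient.mk (Ideal.span ({a} : Set (Polynomial k))) c) *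
          (Ideal.Quotient.mk (Ideal.span ({a} : Set (Polynomial k))) d) = 1 := by
        rw [← map_mul, ← map_one (Ideal.Quotient.mk (Ideal.span ({a} : Set (Polynomial k)))),
          Ideal.Quotient.eq]
        apply Ideal.mem_span_singleton.mpr
        have : c * d - 1 = -(1 - d * c) := by ring
        rw [this]
        exact dvd_neg.mpr h2
      have hmul' : (Ideal.Quotient.mk (Ideal.span ({a} : Set (Polynomial k))) d) *
          (Ideal.Quotient.mk (Ideal.span ({a} : Set (Polynomial k))) c) = 1 := by
        rw [mul_comm]; exact hmul
      refine ⟨⟨Ideal.Quotient.mk (Ideal.span ({a} : Set (Polynomial k))) c,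
        Ideal.Quotient.mk (Ideal.span ({a} : Set (Polynomial k))) d, hmul, hmul'⟩,
        Set.mem_univ _, ?_⟩
      show ((Ideal.Quotient.mk (Ideal.span ({a} : Set (Polynomial k))) c :
          Polynomial k ⧸ Ideal.span ({a} : Set (Polynomial k))) • m) = x
      rw [Submodule.torsionBy.mk_ideal_smul]
      exact hc.symm
end

section
/- For every a ∈ k[t] one has the identity of additive maps F → F: D ∘ C_a − C_a ∘ D = C_{D(a)}, where D(a) := Σ_i D(a_i) t^i + da/dt ∈ k[t] for a = Σ_i a_i t^i. -/
open Polynomial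

noncomputable section

variable {F : Type*} [Field F]

/-- For every `a ∈ k[t]`, `D ∘ C_a − C_a ∘ D = C_{D(a)}` as maps `F → F`,
where `D(a) = Σ_i D(a_i) t^i + da/dt` (i.e. the polynomial `Da` whose `i`-th coefficient
is `D(a.coeff i) + (derivative a).coeff i`). -/
theorem stmt_11 {F : Type*} [Field F] [CharZero F] (τ : F →+* F) (ν : F)
    (hν : τ ν = ν + 1) (D : Derivation ℤ F F) (hDτ : ∀ x : F, D (τ x) = τ (D x))
    (hDν : D ν = 1) (a Da : Polynomial (kfix τ))
    (hDa : ∀ i : ℕ, (Da.coeff i : F) = D ((a.coeff i : F)) + ((derivative a).coeff i : F)) :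
    ∀ x : F, D (carlitz τ ν a x) - carlitz τ ν a (D x) = carlitz τ ν Da x := by
  intro x
  set L : F →ₗ[kfix τ] F := LinearMap.mulLeft (kfix τ) ν - tauLin τ with hL
  have hLdef : ∀ y : F, L y = ν * y - τ y := fun y => rfl
  -- commutator with L
  have comm1 : ∀ y : F, D (L y) = L (D y) + y := by
    intro y
    rw [hLdef, hLdef, map_sub, Derivation.leibniz, hDτ y, hDν]
    simp [smul_eq_mul]
    ring
  have commPow : ∀ (n : ℕ) (y : F), D ((L ^ n) y) = (L ^ n) (D y) + (n : F) * (L ^ (n - 1)) y := by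
    intro n
    induction n with
    | zero => intro y; simp
    | succ m ih =>
      intro y
      have h1 : ∀ z : F, (L ^ (m + 1)) z = L ((L ^ m) z) := by
        intro z; rw [pow_succ']; rfl
      rw [h1, comm1, ih, map_add]
      have h2 : L ((m : F) * (L ^ (m - 1)) y) = (m : F) * L ((L ^ (m - 1)) y) := by
        cases m with
        | zero => simp
        | succ p =>
          have : ((p + 1 : ℕ) : F) * (L ^ p) y = (((p + 1 : ℕ) : kfix τ) : F) * (L ^ p) y := by
            push_cast; ring
          rw [show ((p+1:ℕ):F) * (L ^ (p+1-1)) y = (((p+1:ℕ) : kfix τ) : F) * (L^p) y from this,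
            show ∀ (c : kfix τ) (z : F), L ((c:F) * z) = (c:F) * L z from fun c z => L.map_smul c z]
          push_cast; ring
      rw [h2]
      have hsucc : ∀ (n : ℕ) (z : F), (L ^ (n + 1)) z = L ((L ^ n) z) := by
        intro n z; rw [pow_succ']; rfl
      have h3 : ∀ y : F, (m : F) * L ((L ^ (m - 1)) y) = (m : F) * (L ^ m) y := by
        intro y
        cases m with
        | zero => simp
        | succ p => rw [show p + 1 - 1 = p from rfl, ← hsucc p]
      rw [h3, h1]
      push_cast
      ring
  -- evaluation lemma
  have heval : ∀ (p : Polynomial (kfix τ)) (N : ℕ), p.natDegree < N → ∀ y : F,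
      carlitz τ ν p y = ∑ i ∈ Finset.range N, (p.coeff i : F) * (L ^ i) y := by
    intro p N hN y
    have : carlitz τ ν p = ∑ i ∈ Finset.range N, p.coeff i • L ^ i := by
      set_option synthInstance.maxHeartbeats 1000000 in
      rw [carlitz, Polynomial.aeval_eq_sum_range' hN]
    rw [this]
    rw [LinearMap.sum_apply]
    rfl
  set N := max a.natDegree Da.natDegree + 1 with hNdef
  have hNa : a.natDegree < N := by omega
  have hNDa : Da.natDegree < N := by omega
  have hNd : (derivative a).natDegree < N := lt_of_le_of_lt (natDegree_derivative_le a) (by omega)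
  rw [heval a N hNa x, heval a N hNa (D x), heval Da N hNDa x, map_sum, ← Finset.sum_sub_distrib]
  have step : ∀ i ∈ Finset.range N,
      D ((a.coeff i : F) * (L ^ i) x) - (a.coeff i : F) * (L ^ i) (D x)
        = D ((a.coeff i : F)) * (L ^ i) x + (a.coeff i : F) * ((i : F) * (L ^ (i-1)) x) := by
    intro i _
    rw [Derivation.leibniz, commPow i x]
    simp [smul_eq_mul]
    ring
  rw [Finset.sum_congr rfl step]
  have hDaexp : ∀ i ∈ Finset.range N, (Da.coeff i : F) * (L ^ i) x
      = D ((a.coeff i : F)) * (L ^ i) x + ((derivative a).coeff i : F) * (L ^ i) x := by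
    intro i _; rw [hDa i]; ring
  rw [Finset.sum_congr rfl hDaexp, Finset.sum_add_distrib, Finset.sum_add_distrib]
  congr 1
  -- remaining: ∑ c_i * (i * L^(i-1) x) = ∑ (a'.coeff i) * L^i x
  obtain ⟨M, hM⟩ : ∃ M, N = M + 1 := ⟨max a.natDegree Da.natDegree, rfl⟩
  rw [hM, Finset.sum_range_succ', Finset.sum_range_succ]
  have hlast : ((derivative a).coeff M : F) * (L ^ M) x = 0 := by
    have : a.coeff (M + 1) = 0 := coeff_eq_zero_of_natDegree_lt (by omega)
    rw [coeff_derivative, this]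
    simp
  rw [hlast, add_zero]
  simp only [Nat.cast_zero, zero_mul, mul_zero, add_zero]
  refine Finset.sum_congr rfl fun i _ => ?_
  rw [coeff_derivative]
  push_cast
  ring
end
end

section
/- Let F be a field of characteristic zero, τ : F → F a ring endomorphism, and k := F^τ = { x ∈ F : τ(x) = x }. If f ∈ F is algebraic over k, then there exists an integer n ≥ 1 with τ^n(f) = f. Consequently the subfield k_∞ := { x ∈ F : τ^n(x) = x for some n ≥ 1 } equals the relative algebraic closure of k in F; in particular k_∞ is relatively algebraically closed in F. -/
open Polynomial

noncomputable section

variable {F : Type*} [Field F]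

/-- Pigeonhole key lemma: an injective endomorphism fixing a nonzero polynomial
eventually returns every root to itself. -/
lemma key_lemma (σ : F →+* F) (q : F[X]) (hq : q ≠ 0)
    (hfix : q.map σ = q) {x : F} (hx : q.eval x = 0) :
    ∃ n : ℕ, 1 ≤ n ∧ σ^[n] x = x := by
  have hroot : ∀ m : ℕ, q.eval (σ^[m] x) = 0 := by
    intro m
    induction m with
    | zero => simpa using hx
    | succ m ih =>
      have h2 : q.eval (σ (σ^[m] x)) = σ (q.eval (σ^[m] x)) := by
        conv_lhs => rw [← hfix]
        rw [eval_map, eval₂_hom]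
      rw [Function.iterate_succ_apply', h2, ih, map_zero]
  have hfin : {y : F | q.IsRoot y}.Finite := Polynomial.finite_setOf_isRoot hq
  have := hfin.to_subtype
  obtain ⟨i, j, hij, hmap⟩ := Finite.exists_ne_map_eq_of_infinite
    (fun m : ℕ => (⟨σ^[m] x, hroot m⟩ : {y : F | q.IsRoot y}))
  have heq : σ^[i] x = σ^[j] x := congrArg Subtype.val hmap
  have hinj : ∀ m : ℕ, Function.Injective (σ^[m]) := fun m => σ.injective.iterate m
  rcases hij.lt_or_gt with h | h
  · refine ⟨j - i, by omega, hinj i ?_⟩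
    rw [← Function.iterate_add_apply]
    rw [show i + (j - i) = j by omega]; exact heq.symm
  · refine ⟨i - j, by omega, hinj j ?_⟩
    rw [← Function.iterate_add_apply]
    rw [show j + (i - j) = i by omega]; exact heq

/-- Algebraicity from a nonzero `F`-polynomial with coefficients in a subfield. -/
lemma isAlgebraic_of_coeff_mem (K : Subfield F) (q : F[X]) (hq : q ≠ 0)
    (hc : ∀ i, q.coeff i ∈ K) {x : F} (hx : q.eval x = 0) :
    IsAlgebraic K x := by
  set p : K[X] := ∑ i ∈ Finset.range (q.natDegree + 1),
    C (⟨q.coeff i, hc i⟩ : K) * X ^ i with hp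
  have hmap : p.map (algebraMap K F) = q := by
    rw [hp, Polynomial.map_sum]
    conv_rhs => rw [q.as_sum_range' (q.natDegree + 1) (Nat.lt_succ_self _)]
    refine Finset.sum_congr rfl fun i _ => ?_
    simp only [← Polynomial.C_mul_X_pow_eq_monomial, Polynomial.map_mul,
      Polynomial.map_pow, map_C, map_X]
    rfl
  refine ⟨p, fun h => hq ?_, ?_⟩
  · rw [← hmap, h, Polynomial.map_zero]
  · rw [aeval_def, eval₂_eq_eval_map, hmap, hx]

/-- Periodic elements are algebraic over `kfix τ`. -/
lemma alg_of_periodic (τ : F →+* F) {x : F} {n : ℕ} (hn : 1 ≤ n) (hx : τ^[n] x = x) :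
    IsAlgebraic (kfix τ) x := by
  classical
  set S : Finset F := (Finset.range n).image (fun i => τ^[i] x) with hS
  have hxS : x ∈ S := Finset.mem_image.2 ⟨0, Finset.mem_range.2 hn, rfl⟩
  have hmaps : ∀ y ∈ S, τ y ∈ S := by
    intro y hy
    obtain ⟨i, hi, rfl⟩ := Finset.mem_image.1 hy
    rw [Finset.mem_range] at hi
    rcases Nat.lt_or_ge (i + 1) n with h | h
    · exact Finset.mem_image.2 ⟨i + 1, Finset.mem_range.2 h,
        (Function.iterate_succ_apply' τ i x)⟩
    · have hin : i + 1 = n := by omega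
      have hfx : τ (τ^[i] x) = x := by
        rw [← Function.iterate_succ_apply' τ i x, show i.succ = n from hin, hx]
      rw [hfx]; exact hxS
  have himg : S.image τ = S := by
    apply Finset.eq_of_subset_of_card_le
    · intro y hy; obtain ⟨z, hz, rfl⟩ := Finset.mem_image.1 hy; exact hmaps z hz
    · rw [Finset.card_image_of_injective _ τ.injective]
  set q : F[X] := ∏ y ∈ S, (X - C y) with hq
  have hqfix : q.map τ = q := by
    rw [hq, Polynomial.map_prod]
    simp only [Polynomial.map_sub, map_X, map_C]
    conv_rhs => rw [← himg]
    exact (Finset.prod_image (f := fun y => X - C y) (fun a _ b _ h => τ.injective h)).symm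
  have hqne : q ≠ 0 := by
    rw [hq]; exact Finset.prod_ne_zero_iff.2 fun y _ => X_sub_C_ne_zero y
  refine isAlgebraic_of_coeff_mem (kfix τ) q hqne (fun i => ?_) ?_
  · show τ (q.coeff i) = q.coeff i
    conv_rhs => rw [← hqfix]
    rw [coeff_map]
  · rw [hq, eval_prod]
    exact Finset.prod_eq_zero hxS (by simp)

/-- Every element algebraic over the fixed field is eventually periodic. -/
lemma periodic_of_alg (τ : F →+* F) {f : F} (h : IsAlgebraic (kfix τ) f) :
    ∃ n : ℕ, 1 ≤ n ∧ τ^[n] f = f := by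
  obtain ⟨p, hp0, hpf⟩ := h
  set q : F[X] := p.map (algebraMap (kfix τ) F) with hq
  have hqne : q ≠ 0 := Polynomial.map_ne_zero hp0
  have hco : ∀ i, τ (q.coeff i) = q.coeff i := by
    intro i
    rw [hq, coeff_map]
    exact (p.coeff i).2
  have hqfix : q.map τ = q := by ext i; rw [coeff_map, hco]
  have heval : q.eval f = 0 := by
    rw [hq, ← eval₂_eq_eval_map, ← aeval_def, hpf]
  exact key_lemma τ q hqne hqfix heval

/-- every `f ∈ F` algebraic over `k = F^τ` satisfies `τ^n(f) = f` for some
`n ≥ 1`; consequently `k_∞ = {x : ∃ n ≥ 1, τ^n(x) = x}` equals the relative algebraic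
closure of `k` in `F`, and `k_∞` is relatively algebraically closed in `F`. -/
theorem stmt_15 {F : Type*} [Field F] [CharZero F] (τ : F →+* F) :
    (∀ f : F, IsAlgebraic (kfix τ) f → ∃ n : ℕ, 1 ≤ n ∧ τ^[n] f = f) ∧
    (∀ kinf : Subfield F, (∀ x : F, x ∈ kinf ↔ ∃ n : ℕ, 1 ≤ n ∧ τ^[n] x = x) →
      (∀ x : F, x ∈ kinf ↔ IsAlgebraic (kfix τ) x) ∧
      (∀ x : F, IsAlgebraic kinf x → x ∈ kinf)) := by
  refine ⟨fun f hf => periodic_of_alg τ hf, fun kinf hk => ⟨fun x => ?_, fun x hx => ?_⟩⟩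
  · constructor
    · intro hx
      obtain ⟨n, hn1, hn2⟩ := (hk x).1 hx
      exact alg_of_periodic τ hn1 hn2
    · intro hx
      exact (hk x).2 (periodic_of_alg τ hx)
  · obtain ⟨p, hp0, hpx⟩ := hx
    set q : F[X] := p.map (algebraMap (↥kinf) F) with hq
    have hqne : q ≠ 0 := Polynomial.map_ne_zero hp0
    have heval : q.eval x = 0 := by
      rw [hq, ← eval₂_eq_eval_map, ← aeval_def, hpx]
    have hmem : ∀ i, ∃ m : ℕ, 1 ≤ m ∧ τ^[m] (q.coeff i) = q.coeff i := by
      intro i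
      apply (hk _).mp
      rw [hq, coeff_map]
      exact (p.coeff i).2
    choose m hm1 hm2 using hmem
    set N : ℕ := ∏ i ∈ Finset.range (q.natDegree + 1), m i with hN
    have hN1 : 1 ≤ N := Finset.one_le_prod' fun i _ => hm1 i
    have hfixN : ∀ i, τ^[N] (q.coeff i) = q.coeff i := by
      intro i
      rcases Nat.lt_or_ge i (q.natDegree + 1) with h | h
      · obtain ⟨c, hc⟩ := Finset.dvd_prod_of_mem m (Finset.mem_range.2 h)
        rw [hN, hc, Function.iterate_mul]
        exact Function.iterate_fixed (hm2 i) c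
      · rw [q.coeff_eq_zero_of_natDegree_lt (by omega)]
        exact Function.iterate_fixed (map_zero τ) N
    have hqfixN : q.map (τ ^ N) = q := by
      ext i
      rw [coeff_map, RingHom.coe_pow, hfixN]
    obtain ⟨m', hm'1, hm'2⟩ := key_lemma (τ ^ N) q hqne hqfixN heval
    refine (hk x).2 ⟨N * m', Nat.one_le_iff_ne_zero.2 (by positivity), ?_⟩
    rw [Function.iterate_mul, ← RingHom.coe_pow]
    exact hm'2
end
end

section
/- Let F be a field, τ : F → F a ring endomorphism, and M ⊆ F a subfield with τ(M) ⊆ M. Let f_1, …, f_n ∈ F^τ = { x ∈ F : τ(x) = x }. If f_1, …, f_n are linearly independent over the subfield M^τ = M ∩ F^τ, then they are linearly independent over M. -/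
open Polynomial

noncomputable section

variable {F : Type*} [Field F]

/-- if `M` is a `τ`-stable subfield of `F` and `f_1, …, f_n ∈ F^τ` are
linearly independent over `M^τ = M ⊓ F^τ`, then they are linearly independent over `M`. -/
theorem stmt_16 {F : Type*} [Field F] (τ : F →+* F) (M : Subfield F)
    (hM : ∀ x ∈ M, τ x ∈ M) (n : ℕ) (f : Fin n → F) (hf : ∀ i, τ (f i) = f i)
    (hli : LinearIndependent (M ⊓ kfix τ : Subfield F) f) :
    LinearIndependent M f := by
  classical
  rw [linearIndependent_iff'] at hli ⊢
  suffices key : ∀ m : ℕ, ∀ s : Finset (Fin n), s.card ≤ m →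
      ∀ g : Fin n → F, (∀ i ∈ s, g i ∈ M) → (∀ i ∈ s, g i ≠ 0) →
      ∑ i ∈ s, g i * f i = 0 → s = ∅ by
    intro s g hsum i hi
    by_contra hgi
    set s' := s.filter (fun i => (g i : F) ≠ 0) with hs'
    have hsum0 : ∑ i ∈ s, (g i : F) * f i = 0 := by
      rw [← hsum]
      exact Finset.sum_congr rfl fun i _ => rfl
    have hsum' : ∑ i ∈ s', (g i : F) * f i = 0 := by
      rw [← hsum0]
      apply Finset.sum_subset (Finset.filter_subset _ _)
      intro j hj hnj
      simp only [hs', Finset.mem_filter, hj, true_and, not_not] at hnj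
      rw [hnj, zero_mul]
    have : s' = ∅ := key s'.card s' le_rfl _
      (fun j hj => (g j).2) (fun j hj => (Finset.mem_filter.mp hj).2) hsum'
    have hi' : i ∈ s' := Finset.mem_filter.mpr ⟨hi, by
      exact fun h0 => hgi (Subtype.ext h0)⟩
    rw [this] at hi'
    exact absurd hi' (Finset.notMem_empty i)
  intro m
  induction m with
  | zero =>
    intro s hcard _ _ _ _
    exact Finset.card_eq_zero.mp (Nat.le_zero.mp hcard)
  | succ m ih =>
    intro s hcard g hgM hgne hsum
    by_contra hne
    obtain ⟨j, hj⟩ := Finset.nonempty_iff_ne_empty.mpr hne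
    set h : Fin n → F := fun i => g i / g j with hhdef
    have hhM : ∀ i ∈ s, h i ∈ M := fun i hi => M.div_mem (hgM i hi) (hgM j hj)
    have hhj : h j = 1 := div_self (hgne j hj)
    have hsum1 : ∑ i ∈ s, h i * f i = 0 := by
      have : ∑ i ∈ s, h i * f i = (∑ i ∈ s, g i * f i) / g j := by
        rw [Finset.sum_div]
        exact Finset.sum_congr rfl fun i _ => by
          simp [hhdef, div_mul_eq_mul_div]
      rw [this, hsum, zero_div]
    have hsum2 : ∑ i ∈ s, τ (h i) * f i = 0 := by
      have := congrArg τ hsum1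
      simpa [map_sum, map_mul, hf] using this
    have hsum3 : ∑ i ∈ s, (τ (h i) - h i) * f i = 0 := by
      simp only [sub_mul, Finset.sum_sub_distrib, hsum1, hsum2, sub_zero]
    set t := s.filter (fun i => τ (h i) - h i ≠ 0) with htdef
    have htsub : t ⊆ s.erase j := by
      intro i hi
      rw [htdef, Finset.mem_filter] at hi
      refine Finset.mem_erase.mpr ⟨?_, hi.1⟩
      rintro rfl
      exact hi.2 (by rw [hhj, map_one, sub_self])
    have htcard : t.card ≤ m := by
      have h1 := Finset.card_le_card htsub
      have h2 := Finset.card_erase_of_mem hj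
      omega
    have ht0 : t = ∅ := by
      refine ih t htcard _ ?_ (fun i hi => (Finset.mem_filter.mp hi).2) ?_
      · intro i hi
        have hiS := (Finset.mem_filter.mp hi).1
        exact M.sub_mem (hM _ (hhM i hiS)) (hhM i hiS)
      · rw [← hsum3]
        refine Finset.sum_subset (fun i hi => (Finset.mem_filter.mp hi).1) ?_
        intro i hi hni
        simp only [htdef, Finset.mem_filter, hi, true_and, not_not] at hni
        rw [hni, zero_mul]
    have hfix : ∀ i ∈ s, h i ∈ M ⊓ kfix τ := by
      intro i hi
      refine Subfield.mem_inf.mpr ⟨hhM i hi, ?_⟩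
      have hz : τ (h i) - h i = 0 := by
        by_contra hc
        have : i ∈ t := Finset.mem_filter.mpr ⟨hi, hc⟩
        rw [ht0] at this
        exact absurd this (Finset.notMem_empty i)
      exact sub_eq_zero.mp hz
    set g' : Fin n → (M ⊓ kfix τ : Subfield F) :=
      fun i => if hi : i ∈ s then ⟨h i, hfix i hi⟩ else 0 with hg'
    have : g' j = 0 := by
      refine hli s g' ?_ j hj
      have : ∀ i ∈ s, g' i • f i = h i * f i := by
        intro i hi
        simp only [hg', dif_pos hi]
        rfl
      rw [Finset.sum_congr rfl this, hsum1]
    have : h j = 0 := by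
      have := congrArg (Subtype.val) this
      simpa [hg', dif_pos hj] using this
    rw [hhj] at this
    exact one_ne_zero this
end
end

section
/- Let Ω ⊆ ℂ be an open set with Ω + 1 ⊆ Ω, let ζ_1, …, ζ_m : Ω → ℂ be functions, and suppose: (i) there is a permutation σ of {1, …, m} with ζ_j(z + 1) = ζ_{σ(j)}(z) for all z ∈ Ω and all j; (ii) z ≠ ζ_j(z) for every z ∈ Ω and every j. For functions f : Ω → ℂ define the operator (C_t f)(z) := z · f(z) − f(z + 1). Let a_0, …, a_d : Ω → ℂ satisfy a_i(z + 1) = a_i(z) and Σ_{i=0}^d a_i(z) ζ_j(z)^i = 0 for all z ∈ Ω and all j (the ζ_j are roots of the 1-periodic polynomial p = Σ a_i t^i). For r ≥ 0 define y_r : Ω → ℂ by y_r(z) := Σ_{j=1}^m ζ_j(z)^r Γ(z − ζ_j(z)). Then C_t(y_r) = y_{r+1} on Ω for every r ≥ 0, and consequently Σ_{i=0}^d a_i(z) · (C_t^{\,i} y_r)(z) = 0 for every z ∈ Ω and every r ≥ 0, i.e. the functions y_r are solutions of the difference equation C_p(y) = 0. -/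
noncomputable section

/-- with `(C_t f)(z) = z f(z) − f(z+1)`, `ζ_1, …, ζ_m` permuted by the
shift `z ↦ z + 1` and roots of the `1`-periodic polynomial `p = Σ_i a_i t^i` on `Ω`,
the functions `y_r(z) = Σ_j ζ_j(z)^r Γ(z − ζ_j(z))` satisfy `C_t(y_r) = y_{r+1}` on `Ω`,
and hence `C_p(y_r) = Σ_i a_i · C_t^i(y_r) = 0` on `Ω`. -/
theorem stmt_18 (Ω : Set ℂ) (hΩo : IsOpen Ω) (hΩ1 : ∀ z ∈ Ω, z + 1 ∈ Ω)
    (m : ℕ) (ζ : Fin m → ℂ → ℂ) (σ : Equiv.Perm (Fin m))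
    (hσ : ∀ j, ∀ z ∈ Ω, ζ j (z + 1) = ζ (σ j) z)
    (hne : ∀ z ∈ Ω, ∀ j, z ≠ ζ j z)
    (d : ℕ) (a : Fin (d + 1) → ℂ → ℂ)
    (haper : ∀ i, ∀ z ∈ Ω, a i (z + 1) = a i z)
    (hroot : ∀ z ∈ Ω, ∀ j, ∑ i : Fin (d + 1), a i z * (ζ j z) ^ (i : ℕ) = 0)
    (Ct : (ℂ → ℂ) → ℂ → ℂ) (hCt : ∀ f : ℂ → ℂ, ∀ z : ℂ, Ct f z = z * f z - f (z + 1))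
    (y : ℕ → ℂ → ℂ)
    (hy : ∀ r : ℕ, ∀ z : ℂ, y r z = ∑ j : Fin m, (ζ j z) ^ r * Complex.Gamma (z - ζ j z)) :
    (∀ r : ℕ, ∀ z ∈ Ω, Ct (y r) z = y (r + 1) z) ∧
    (∀ r : ℕ, ∀ z ∈ Ω, ∑ i : Fin (d + 1), a i z * (Ct^[(i : ℕ)] (y r)) z = 0) := by
  have key : ∀ r : ℕ, ∀ z ∈ Ω, Ct (y r) z = y (r + 1) z := by
    intro r z hz
    rw [hCt, hy, hy, hy]
    have h1 : ∑ j : Fin m, (ζ j (z + 1)) ^ r * Complex.Gamma (z + 1 - ζ j (z + 1))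
        = ∑ j : Fin m, (ζ j z) ^ r * ((z - ζ j z) * Complex.Gamma (z - ζ j z)) := by
      calc ∑ j : Fin m, (ζ j (z + 1)) ^ r * Complex.Gamma (z + 1 - ζ j (z + 1))
          = ∑ j : Fin m, (ζ (σ j) z) ^ r * Complex.Gamma (z + 1 - ζ (σ j) z) := by
            refine Finset.sum_congr rfl fun j _ => by rw [hσ j z hz]
        _ = ∑ j : Fin m, (ζ j z) ^ r * Complex.Gamma (z + 1 - ζ j z) :=
            Equiv.sum_comp σ (fun j => (ζ j z) ^ r * Complex.Gamma (z + 1 - ζ j z))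
        _ = ∑ j : Fin m, (ζ j z) ^ r * ((z - ζ j z) * Complex.Gamma (z - ζ j z)) := by
            refine Finset.sum_congr rfl fun j _ => ?_
            have hz0 : z - ζ j z ≠ 0 := sub_ne_zero.mpr (hne z hz j)
            rw [show z + 1 - ζ j z = (z - ζ j z) + 1 by ring,
              Complex.Gamma_add_one _ hz0]
    rw [h1, Finset.mul_sum, ← Finset.sum_sub_distrib]
    refine Finset.sum_congr rfl fun j _ => by ring
  refine ⟨key, ?_⟩
  have iter : ∀ i r : ℕ, ∀ z ∈ Ω, (Ct^[i] (y r)) z = y (r + i) z := by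
    intro i
    induction i with
    | zero => intro r z hz; simp
    | succ n ih =>
      intro r z hz
      rw [Function.iterate_succ_apply', hCt, ih r z hz, ih r (z + 1) (hΩ1 z hz),
        ← hCt, key (r + n) z hz]
      ring_nf
  intro r z hz
  calc ∑ i : Fin (d + 1), a i z * (Ct^[(i : ℕ)] (y r)) z
      = ∑ i : Fin (d + 1), a i z * ∑ j : Fin m, (ζ j z) ^ (r + (i : ℕ)) *
          Complex.Gamma (z - ζ j z) := by
        refine Finset.sum_congr rfl fun i _ => by rw [iter i r z hz, hy]
    _ = ∑ j : Fin m, (∑ i : Fin (d + 1), a i z * (ζ j z) ^ (i : ℕ)) *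
          ((ζ j z) ^ r * Complex.Gamma (z - ζ j z)) := by
        simp_rw [Finset.mul_sum, Finset.sum_mul]
        rw [Finset.sum_comm]
        refine Finset.sum_congr rfl fun j _ => Finset.sum_congr rfl fun i _ => by
          rw [pow_add]; ring
    _ = 0 := by
        refine Finset.sum_eq_zero fun j _ => by rw [hroot z hz j, zero_mul]
end
end
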